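/- Let k be a field and R a unital associative k-algebra. Then I⁺(E(R)) + I⁻(E(R)) = E(R); that is, every φ ∈ E(R) can be written as φ = φ⁺ + φ⁻ where φ⁺ ∈ E(R) has image contained in some t^{n′}R[[t]] and φ⁻ ∈ E(R) annihilates some tⁿR[[t]]. -/

import Mathlib

/-- The lattice `tⁿR[[t]]` inside the formal Laurent series module `R((t))`:
series whose coefficients vanish in degrees `< n`. -/
def lat (R : Type*) [Ring R] (n : ℤ) : Set (LaurentSeries R) :=
  {f | ∀ i : ℤ, i < n → f.coeff i = 0}

/-- An endomorphism of `R((t))` as a right `R`-module: an additive map commuting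
with right multiplication by scalars `r ∈ R`. -/
def IsREndo {R : Type*} [Ring R] (φ : LaurentSeries R → LaurentSeries R) : Prop :=
  (∀ f g : LaurentSeries R, φ (f + g) = φ f + φ g) ∧
  (∀ (f : LaurentSeries R) (r : R), φ (f * HahnSeries.C r) = φ f * HahnSeries.C r)

/-- Membership in `E(R)`: a right `R`-module endomorphism `φ` of `R((t))` such that
(1) for every `n` there is `n′` with `φ(tⁿR[[t]]) ⊆ t^{n′}R[[t]]`, and
(2) for every `m` there is `m′` with `φ(t^{m′}R[[t]]) ⊆ tᵐR[[t]]`. -/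
def InE {R : Type*} [Ring R] (φ : LaurentSeries R → LaurentSeries R) : Prop :=
  IsREndo φ ∧
  (∀ n : ℤ, ∃ n' : ℤ, ∀ f ∈ lat R n, φ f ∈ lat R n') ∧
  (∀ m : ℤ, ∃ m' : ℤ, ∀ f ∈ lat R m', φ f ∈ lat R m)


/-- Membership in `I⁺(E(R))`: an element of `E(R)` whose image is contained in a
lattice `t^{n′}R[[t]]`. -/
def InIPlusE {R : Type*} [Ring R] (φ : LaurentSeries R → LaurentSeries R) : Prop :=
  InE φ ∧ ∃ n' : ℤ, ∀ f : LaurentSeries R, φ f ∈ lat R n'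

/-- Membership in `I⁻(E(R))`: an element of `E(R)` annihilating a lattice `tⁿR[[t]]`. -/
def InIMinusE {R : Type*} [Ring R] (φ : LaurentSeries R → LaurentSeries R) : Prop :=
  InE φ ∧ ∃ n : ℤ, ∀ f ∈ lat R n, φ f = 0

namespace HahnSeries

variable {R : Type*} [Ring R]

theorem truncLT_mul_C (c : ℤ) (f : LaurentSeries R) (r : R) :
    truncLT c (f * C r) = truncLT c f * C r := by
  ext i
  simp only [C_apply, coeff_mul_single_zero, HahnSeries.coeff_truncLT]
  split_ifs <;> simp

theorem truncLT_mem_lat {c n : ℤ} {f : LaurentSeries R} (hf : f ∈ lat R n) :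
    truncLT c f ∈ lat R n := fun i hi => by
  rw [HahnSeries.coeff_truncLT, hf i hi, ite_self]

theorem truncLT_eq_zero_of_mem_lat {c : ℤ} {f : LaurentSeries R} (hf : f ∈ lat R c) :
    truncLT c f = 0 := by
  ext i
  rw [HahnSeries.coeff_truncLT, coeff_zero]
  split_ifs with hi
  exacts [hf i hi, rfl]

theorem sub_truncLT_mem_lat (c : ℤ) (f : LaurentSeries R) : f - truncLT c f ∈ lat R c :=
  fun i hi => by rw [coeff_sub, coeff_truncLT_of_lt hi, sub_self]

theorem sub_truncLT_mem_lat_of_mem {c n : ℤ} {f : LaurentSeries R} (hf : f ∈ lat R n) :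
    f - truncLT c f ∈ lat R n :=
  fun i hi => by rw [coeff_sub, hf i hi, truncLT_mem_lat hf i hi, sub_self]

end HahnSeries

open HahnSeries

section Endomorphisms

variable {R : Type*} [Ring R] {φ ψ : LaurentSeries R → LaurentSeries R}

theorem IsREndo.map_zero (hφ : IsREndo φ) : φ 0 = 0 := by
  simpa using hφ.1 0 0

theorem IsREndo.comp (hφ : IsREndo φ) (hψ : IsREndo ψ) : IsREndo (φ ∘ ψ) :=
  ⟨fun f g => by simp only [Function.comp_apply, hψ.1, hφ.1],
    fun f r => by simp only [Function.comp_apply, hψ.2, hφ.2]⟩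

theorem InE.comp (hφ : InE φ) (hψ : InE ψ) : InE (φ ∘ ψ) := by
  refine ⟨hφ.1.comp hψ.1, fun n => ?_, fun m => ?_⟩
  · obtain ⟨n₁, hn₁⟩ := hψ.2.1 n
    obtain ⟨n₂, hn₂⟩ := hφ.2.1 n₁
    exact ⟨n₂, fun f hf => hn₂ _ (hn₁ f hf)⟩
  · obtain ⟨m₁, hm₁⟩ := hφ.2.2 m
    obtain ⟨m₂, hm₂⟩ := hψ.2.2 m₁
    exact ⟨m₂, fun f hf => hm₁ _ (hm₂ f hf)⟩

theorem inE_truncLT (c : ℤ) : InE (truncLT c : LaurentSeries R → LaurentSeries R) := by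
  refine ⟨⟨truncLT_add c, truncLT_mul_C c⟩, fun n => ⟨n, fun f => truncLT_mem_lat⟩,
    fun m => ⟨c, fun f hf => ?_⟩⟩
  rw [truncLT_eq_zero_of_mem_lat hf]
  exact fun i _ => rfl

theorem inE_sub_truncLT (c : ℤ) : InE fun f : LaurentSeries R => f - truncLT c f := by
  refine ⟨⟨fun f g => ?_, fun f r => ?_⟩, fun _ => ⟨c, fun f _ => sub_truncLT_mem_lat c f⟩,
    fun m => ⟨m, fun f => sub_truncLT_mem_lat_of_mem⟩⟩
  · dsimp only; rw [truncLT_add]; abel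
  · dsimp only; rw [truncLT_mul_C, sub_mul]

end Endomorphisms

-- Split `f` into its polar part `truncLT 0 f` and its power series part: then `φ⁻ = φ ∘ truncLT 0`
-- kills `t⁰R[[t]]`, and `φ⁺` takes values in the lattice bounding `φ(t⁰R[[t]])`.
theorem IPlusE_add_IMinusE_eq_E_general
    (R : Type*) [Ring R]
    (φ : LaurentSeries R → LaurentSeries R) (hφ : InE φ) :
    ∃ φp φm : LaurentSeries R → LaurentSeries R,
      InIPlusE φp ∧ InIMinusE φm ∧ ∀ f : LaurentSeries R, φ f = φp f + φm f := by
  obtain ⟨n', hn'⟩ := hφ.2.1 0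
  refine ⟨φ ∘ fun f => f - truncLT 0 f, φ ∘ truncLT 0, ⟨hφ.comp (inE_sub_truncLT 0), ?_⟩,
    ⟨hφ.comp (inE_truncLT 0), ?_⟩, fun f => ?_⟩
  · exact ⟨n', fun f => hn' _ (sub_truncLT_mem_lat 0 f)⟩
  · exact ⟨0, fun f hf => by simp only [Function.comp_apply, truncLT_eq_zero_of_mem_lat hf,
      hφ.1.map_zero]⟩
  · simp only [Function.comp_apply, ← hφ.1.1, sub_add_cancel]

/-- `I⁺(E(R)) + I⁻(E(R)) = E(R)`: every `φ ∈ E(R)` decomposes as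
`φ = φ⁺ + φ⁻` with `φ⁺ ∈ E(R)` having image in some lattice and `φ⁻ ∈ E(R)`
annihilating some lattice. -/
theorem IPlusE_add_IMinusE_eq_E
    (k R : Type*) [Field k] [Ring R] [Algebra k R]
    (φ : LaurentSeries R → LaurentSeries R) (hφ : InE φ) :
    ∃ φp φm : LaurentSeries R → LaurentSeries R,
      InIPlusE φp ∧ InIMinusE φm ∧ ∀ f : LaurentSeries R, φ f = φp f + φm f :=
  IPlusE_add_IMinusE_eq_E_general R φ hφ
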